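/- arXiv:1403.7048 — 4 statements merged into one kernel-verified Lean document; each statement's English description precedes it below -/
import Mathlib

section
/- Let R be a principal ideal domain and K its field of fractions, with φ : R → K the canonical algebra map applied entrywise to matrices. Suppose matrices A : Matrix (Fin n) (Fin r) R, B : Matrix (Fin m) (Fin r) R, C : Matrix (Fin z) (Fin n) R, D : Matrix (Fin z) (Fin m) R satisfy C·A = D·B and form a pullback square in Mat(R), i.e. for every q ∈ ℕ and all matrices P : Matrix (Fin n) (Fin q) R, Q : Matrix (Fin m) (Fin q) R with C·P = D·Q there exists a unique H : Matrix (Fin r) (Fin q) R with A·H = P and B·H = Q. Then the entrywise images A.map φ, B.map φ, C.map φ, D.map φ form a pullback square in Mat(K): for every q ∈ ℕ and all matrices P : Matrix (Fin n) (Fin q) K, Q : Matrix (Fin m) (Fin q) K with (C.map φ)·P = (D.map φ)·Q there exists a unique H : Matrix (Fin r) (Fin q) K with (A.map φ)·H = P and (B.map φ)·H = Q. -/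
section aux

variable {R K : Type*} [CommRing R] [IsDomain R]
    [Field K] [Algebra R K] [IsFractionRing R K]

lemma matrix_exists_denominator {a b : ℕ} (M : Matrix (Fin a) (Fin b) K) :
    ∃ (d : R) (M₀ : Matrix (Fin a) (Fin b) R), d ≠ 0 ∧
      M₀.map (algebraMap R K) = (algebraMap R K d) • M := by
  obtain ⟨s, hs⟩ := IsLocalization.exist_integer_multiples_of_finite (S := K) (nonZeroDivisors R)
    (fun p : Fin a × Fin b => M p.1 p.2)
  refine ⟨(s : R), Matrix.of fun i j => (hs (i, j)).choose,
    nonZeroDivisors.coe_ne_zero s, ?_⟩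
  ext i j
  have h := (hs (i, j)).choose_spec
  simp only [Matrix.map_apply, Matrix.smul_apply, Matrix.of_apply]
  rw [h]
  simp [Algebra.smul_def]

omit [IsDomain R] in
lemma matrix_map_injective {a b : ℕ} {M N : Matrix (Fin a) (Fin b) R}
    (h : M.map (algebraMap R K) = N.map (algebraMap R K)) : M = N := by
  ext i j
  exact IsFractionRing.injective R K (congrFun (congrFun h i) j)

omit [IsDomain R] [IsFractionRing R K] in
lemma matrix_map_smul' {a b : ℕ} (c : R) (M : Matrix (Fin a) (Fin b) R) :
    (c • M).map (algebraMap R K) = (algebraMap R K c) • M.map (algebraMap R K) := by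
  ext i j
  simp [Matrix.map_apply, Algebra.smul_def, smul_eq_mul]

end aux

/-- Pullback squares of matrices over a PID are preserved when the entries are
interpreted in the field of fractions. -/
theorem matrix_pullback_map_fractionRing
    {R K : Type*} [CommRing R] [IsDomain R] [IsPrincipalIdealRing R]
    [Field K] [Algebra R K] [IsFractionRing R K]
    {n m r z : ℕ}
    (A : Matrix (Fin n) (Fin r) R) (B : Matrix (Fin m) (Fin r) R)
    (C : Matrix (Fin z) (Fin n) R) (D : Matrix (Fin z) (Fin m) R)
    (hcomm : C * A = D * B)
    (hpb : ∀ (q : ℕ) (P : Matrix (Fin n) (Fin q) R) (Q : Matrix (Fin m) (Fin q) R),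
      C * P = D * Q → ∃! H : Matrix (Fin r) (Fin q) R, A * H = P ∧ B * H = Q) :
    ∀ (q : ℕ) (P : Matrix (Fin n) (Fin q) K) (Q : Matrix (Fin m) (Fin q) K),
      C.map (algebraMap R K) * P = D.map (algebraMap R K) * Q →
      ∃! H : Matrix (Fin r) (Fin q) K,
        A.map (algebraMap R K) * H = P ∧ B.map (algebraMap R K) * H = Q := by
  have hinj : Function.Injective (algebraMap R K) := IsFractionRing.injective R K
  have hker : ∀ (q : ℕ) (Δ : Matrix (Fin r) (Fin q) K),
      A.map (algebraMap R K) * Δ = 0 → B.map (algebraMap R K) * Δ = 0 → Δ = 0 := by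
    intro q Δ hA hB
    obtain ⟨f, Δ₀, hf, hΔ₀⟩ := matrix_exists_denominator (R := R) Δ
    have h1 : A * Δ₀ = 0 := by
      apply matrix_map_injective (R := R) (K := K)
      simp only [Matrix.map_mul, hΔ₀, Matrix.mul_smul, hA, smul_zero]
      ext i j
      simp
    have h2 : B * Δ₀ = 0 := by
      apply matrix_map_injective (R := R) (K := K)
      simp only [Matrix.map_mul, hΔ₀, Matrix.mul_smul, hB, smul_zero]
      ext i j
      simp
    have h0 : C * (0 : Matrix (Fin n) (Fin q) R) = D * (0 : Matrix (Fin m) (Fin q) R) := by simp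
    obtain ⟨H₀, _, huniq⟩ := hpb q 0 0 h0
    have hz : Δ₀ = (0 : Matrix (Fin r) (Fin q) R) := by
      rw [huniq Δ₀ ⟨h1, h2⟩, huniq 0 ⟨by simp, by simp⟩]
    rw [hz] at hΔ₀
    have hsz : (algebraMap R K f) • Δ = 0 := by simpa using hΔ₀.symm
    have hfK : algebraMap R K f ≠ 0 := fun h => hf (hinj (h.trans (map_zero _).symm))
    exact (smul_eq_zero.mp hsz).resolve_left hfK
  intro q P Q hPQ
  obtain ⟨d, P₀, hd, hP₀⟩ := matrix_exists_denominator (R := R) P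
  obtain ⟨e, Q₀, he, hQ₀⟩ := matrix_exists_denominator (R := R) Q
  have hune : algebraMap R K (d * e) ≠ 0 :=
    fun h => (mul_ne_zero hd he) (hinj (h.trans (map_zero _).symm))
  have hP₁ : (e • P₀).map (algebraMap R K) = algebraMap R K (d * e) • P := by
    rw [matrix_map_smul', hP₀, smul_smul, ← map_mul, mul_comm e d]
  have hQ₁ : (d • Q₀).map (algebraMap R K) = algebraMap R K (d * e) • Q := by
    rw [matrix_map_smul', hQ₀, smul_smul, ← map_mul]
  have hcomm' : C * (e • P₀) = D * (d • Q₀) := by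
    apply matrix_map_injective (R := R) (K := K)
    rw [Matrix.map_mul, Matrix.map_mul, hP₁, hQ₁, Matrix.mul_smul, Matrix.mul_smul, hPQ]
  obtain ⟨H₀, ⟨hAH, hBH⟩, _⟩ := hpb q (e • P₀) (d • Q₀) hcomm'
  refine ⟨(algebraMap R K (d * e))⁻¹ • H₀.map (algebraMap R K), ⟨?_, ?_⟩, ?_⟩
  · rw [Matrix.mul_smul, ← Matrix.map_mul, hAH, hP₁, smul_smul, inv_mul_cancel₀ hune, one_smul]
  · rw [Matrix.mul_smul, ← Matrix.map_mul, hBH, hQ₁, smul_smul, inv_mul_cancel₀ hune, one_smul]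
  · rintro H' ⟨hA', hB'⟩
    have hd1 : A.map (algebraMap R K) *
        (H' - (algebraMap R K (d * e))⁻¹ • H₀.map (algebraMap R K)) = 0 := by
      rw [Matrix.mul_sub, hA', Matrix.mul_smul, ← Matrix.map_mul, hAH, hP₁, smul_smul,
        inv_mul_cancel₀ hune, one_smul, sub_self]
    have hd2 : B.map (algebraMap R K) *
        (H' - (algebraMap R K (d * e))⁻¹ • H₀.map (algebraMap R K)) = 0 := by
      rw [Matrix.mul_sub, hB', Matrix.mul_smul, ← Matrix.map_mul, hBH, hQ₁, smul_smul,
        inv_mul_cancel₀ hune, one_smul, sub_self]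
    exact sub_eq_zero.mp (hker q _ hd1 hd2)
end

section
/- Let R be a principal ideal domain and K its field of fractions, with φ : R → K the canonical algebra map applied entrywise to matrices. Suppose matrices C : Matrix (Fin n) (Fin z) R, D : Matrix (Fin m) (Fin z) R, P : Matrix (Fin t) (Fin n) R, Q : Matrix (Fin t) (Fin m) R satisfy P·C = Q·D and form a pushout square in Mat(R), i.e. for every q ∈ ℕ and all matrices E : Matrix (Fin q) (Fin n) R, F : Matrix (Fin q) (Fin m) R with E·C = F·D there exists a unique G : Matrix (Fin q) (Fin t) R with G·P = E and G·Q = F. Then the entrywise images under φ form a pushout square in Mat(K): for every q ∈ ℕ and all matrices E : Matrix (Fin q) (Fin n) K, F : Matrix (Fin q) (Fin m) K with E·(C.map φ) = F·(D.map φ) there exists a unique G : Matrix (Fin q) (Fin t) K with G·(P.map φ) = E and G·(Q.map φ) = F. -/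
/-- Denominator clearing for matrices over the fraction field. -/
lemma matrix_exists_denominator_s1
    {R K : Type*} [CommRing R] [IsDomain R]
    [Field K] [Algebra R K] [IsFractionRing R K]
    {a b : ℕ} (A : Matrix (Fin a) (Fin b) K) :
    ∃ (d : R) (A' : Matrix (Fin a) (Fin b) R), d ≠ 0 ∧
      A'.map (algebraMap R K) = algebraMap R K d • A := by
  obtain ⟨d, hd⟩ := IsLocalization.exist_integer_multiples (nonZeroDivisors R)
    Finset.univ (fun p : Fin a × Fin b => A p.1 p.2)
  refine ⟨(d : R), Matrix.of fun i j =>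
    (hd (i, j) (Finset.mem_univ _)).choose, nonZeroDivisors.coe_ne_zero d, ?_⟩
  ext i j
  have := (hd (i, j) (Finset.mem_univ _)).choose_spec
  simp only [Matrix.map_apply, Matrix.smul_apply, Matrix.of_apply, smul_eq_mul]
  rw [this]; exact Algebra.smul_def _ _

/-- Pushout squares of matrices over a PID are preserved when the entries are
interpreted in the field of fractions. -/
theorem matrix_pushout_map_fractionRing
    {R K : Type*} [CommRing R] [IsDomain R] [IsPrincipalIdealRing R]
    [Field K] [Algebra R K] [IsFractionRing R K]
    {n m t z : ℕ}
    (C : Matrix (Fin n) (Fin z) R) (D : Matrix (Fin m) (Fin z) R)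
    (P : Matrix (Fin t) (Fin n) R) (Q : Matrix (Fin t) (Fin m) R)
    (hcomm : P * C = Q * D)
    (hpo : ∀ (q : ℕ) (E : Matrix (Fin q) (Fin n) R) (F : Matrix (Fin q) (Fin m) R),
      E * C = F * D → ∃! G : Matrix (Fin q) (Fin t) R, G * P = E ∧ G * Q = F) :
    ∀ (q : ℕ) (E : Matrix (Fin q) (Fin n) K) (F : Matrix (Fin q) (Fin m) K),
      E * C.map (algebraMap R K) = F * D.map (algebraMap R K) →
      ∃! G : Matrix (Fin q) (Fin t) K,
        G * P.map (algebraMap R K) = E ∧ G * Q.map (algebraMap R K) = F := by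
  intro q E F hEF
  set φ := algebraMap R K with hφ
  have hinj : Function.Injective (fun M : Matrix (Fin q) (Fin z) R => M.map φ) :=
    Matrix.map_injective (IsFractionRing.injective R K)
  have hinj' : Function.Injective (fun M : Matrix (Fin q) (Fin n) R => M.map φ) :=
    Matrix.map_injective (IsFractionRing.injective R K)
  have hinj'' : Function.Injective (fun M : Matrix (Fin q) (Fin m) R => M.map φ) :=
    Matrix.map_injective (IsFractionRing.injective R K)
  -- uniqueness part, stated for differences
  have huniq : ∀ H : Matrix (Fin q) (Fin t) K,
      H * P.map φ = 0 → H * Q.map φ = 0 → H = 0 := by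
    intro H hP hQ
    obtain ⟨d, H', hd, hH'⟩ := matrix_exists_denominator_s1 (R := R) H
    have hφd : φ d ≠ 0 := (map_ne_zero_iff φ (IsFractionRing.injective R K)).mpr hd
    have h1 : H' * P = 0 := by
      apply Matrix.map_injective (f := φ) (IsFractionRing.injective R K)
      show (H' * P).map φ = (0 : Matrix (Fin q) (Fin n) R).map φ
      rw [Matrix.map_mul, hH', Matrix.smul_mul, hP]
      simp
    have h2 : H' * Q = 0 := by
      apply Matrix.map_injective (f := φ) (IsFractionRing.injective R K)
      show (H' * Q).map φ = (0 : Matrix (Fin q) (Fin m) R).map φ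
      rw [Matrix.map_mul, hH', Matrix.smul_mul, hQ]
      simp
    obtain ⟨G₀, -, hG₀uniq⟩ := hpo q 0 0 (by simp)
    have hz : H' = (0 : Matrix (Fin q) (Fin t) R) := by
      rw [hG₀uniq H' ⟨h1, h2⟩, hG₀uniq 0 ⟨by simp, by simp⟩]
    have : φ d • H = 0 := by rw [← hH', hz]; simp
    have := smul_eq_zero.mp this
    tauto
  -- existence
  obtain ⟨dE, E', hdE, hE'⟩ := matrix_exists_denominator_s1 (R := R) E
  obtain ⟨dF, F', hdF, hF'⟩ := matrix_exists_denominator_s1 (R := R) F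
  set d : R := dE * dF with hdDef
  have hd : d ≠ 0 := mul_ne_zero hdE hdF
  have hφd : φ d ≠ 0 := (map_ne_zero_iff φ (IsFractionRing.injective R K)).mpr hd
  set E'' : Matrix (Fin q) (Fin n) R := dF • E' with hE''
  set F'' : Matrix (Fin q) (Fin m) R := dE • F' with hF''
  have hE''map : E''.map φ = φ d • E := by
    ext i j
    simp only [hE'', Matrix.map_apply, Matrix.smul_apply, smul_eq_mul, map_mul, hdDef]
    have := congrFun (congrFun hE' i) j
    simp only [Matrix.map_apply, Matrix.smul_apply, smul_eq_mul] at this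
    rw [this]; ring
  have hF''map : F''.map φ = φ d • F := by
    ext i j
    simp only [hF'', Matrix.map_apply, Matrix.smul_apply, smul_eq_mul, map_mul, hdDef]
    have := congrFun (congrFun hF' i) j
    simp only [Matrix.map_apply, Matrix.smul_apply, smul_eq_mul] at this
    rw [this]; ring
  have hEC : E'' * C = F'' * D := by
    apply hinj
    show (E'' * C).map φ = (F'' * D).map φ
    rw [Matrix.map_mul, Matrix.map_mul, hE''map, hF''map,
      Matrix.smul_mul, Matrix.smul_mul, hEF]
  obtain ⟨G', ⟨hG'P, hG'Q⟩, -⟩ := hpo q E'' F'' hEC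
  refine ⟨(φ d)⁻¹ • G'.map φ, ⟨?_, ?_⟩, ?_⟩
  · rw [Matrix.smul_mul, ← Matrix.map_mul, hG'P, hE''map, smul_smul,
      inv_mul_cancel₀ hφd, one_smul]
  · rw [Matrix.smul_mul, ← Matrix.map_mul, hG'Q, hF''map, smul_smul,
      inv_mul_cancel₀ hφd, one_smul]
  · intro G ⟨hGP, hGQ⟩
    have h := huniq (G - (φ d)⁻¹ • G'.map φ) ?_ ?_
    · exact sub_eq_zero.mp h
    · rw [Matrix.sub_mul, hGP, Matrix.smul_mul, ← Matrix.map_mul, hG'P, hE''map,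
        smul_smul, inv_mul_cancel₀ hφd, one_smul, sub_self]
    · rw [Matrix.sub_mul, hGQ, Matrix.smul_mul, ← Matrix.map_mul, hG'Q, hF''map,
        smul_smul, inv_mul_cancel₀ hφd, one_smul, sub_self]
end

section
/- Let R be a principal ideal domain and let C : Matrix (Fin z) (Fin n) R and D : Matrix (Fin z) (Fin m) R be matrices (viewed as arrows n → z and m → z of Mat(R)). Then there exist a natural number r with r ≤ n + m and matrices A : Matrix (Fin n) (Fin r) R, B : Matrix (Fin m) (Fin r) R such that C·A = D·B and the square is a pullback in Mat(R): for every q ∈ ℕ and all matrices P : Matrix (Fin n) (Fin q) R, Q : Matrix (Fin m) (Fin q) R with C·P = D·Q there exists a unique H : Matrix (Fin r) (Fin q) R with A·H = P and B·H = Q. In other words, Mat(R) has pullbacks for any principal ideal domain R. -/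
/-!
The pullback of `C` and `D` is the kernel of the block matrix `[C | -D]`. Over a PID this kernel
is a free submodule of `R^(n+m)`, of some rank `r ≤ n + m`. The matrix whose columns are a basis
of it is injective with image the kernel, so every matrix whose columns lie in the kernel factors
uniquely through it.
-/

open Matrix LinearMap

theorem LinearMap.existsUnique_comp_eq_of_range_le {S M N P : Type*} [Semiring S]
    [AddCommMonoid M] [AddCommMonoid N] [AddCommMonoid P] [Module S M] [Module S N] [Module S P]
    {f : N →ₗ[S] M} (hf : Function.Injective f) {g : P →ₗ[S] M} (hg : range g ≤ range f) :
    ∃! h : P →ₗ[S] N, f ∘ₗ h = g := by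
  let h₀ := (LinearEquiv.ofInjective f hf).symm.toLinearMap ∘ₗ
    g.codRestrict (range f) fun x => hg (mem_range_self g x)
  have hh₀ : f ∘ₗ h₀ = g := by
    ext x
    simp [h₀]
  exact ⟨h₀, hh₀, fun h hh => (cancel_left hf).1 (hh.trans hh₀.symm)⟩

namespace Matrix

variable {S : Type*} [CommRing S] {ι ι' κ ζ : Type*}

def IsKernel [Fintype ι] [Fintype κ] (E : Matrix ζ ι S) (K : Matrix ι κ S) : Prop :=
  E * K = 0 ∧ ∀ (q : ℕ) (X : Matrix ι (Fin q) S), E * X = 0 → ∃! H : Matrix κ (Fin q) S, K * H = X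

def IsPullback [Fintype ι] [Fintype ι'] [Fintype κ] (C : Matrix ζ ι S) (D : Matrix ζ ι' S)
    (A : Matrix ι κ S) (B : Matrix ι' κ S) : Prop :=
  C * A = D * B ∧ ∀ (q : ℕ) (P : Matrix ι (Fin q) S) (Q : Matrix ι' (Fin q) S),
    C * P = D * Q → ∃! H : Matrix κ (Fin q) S, A * H = P ∧ B * H = Q

theorem existsUnique_mul_eq_of_range_le [Fintype ι] [DecidableEq ι] [Fintype κ] [DecidableEq κ]
    {q : Type*} [Fintype q] [DecidableEq q] {K : Matrix ι κ S} {X : Matrix ι q S}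
    (hK : Function.Injective (toLin' K)) (hX : range (toLin' X) ≤ range (toLin' K)) :
    ∃! H : Matrix κ q S, K * H = X := by
  have hcomp : ∀ H : Matrix κ q S, K * H = X ↔ toLin' K ∘ₗ toLin' H = toLin' X := fun H => by
    rw [← toLin'_mul, toLin'.injective.eq_iff]
  simp only [hcomp]
  exact toLin'.symm.bijective.existsUnique_iff.2 <| by
    simpa using existsUnique_comp_eq_of_range_le hK hX

theorem isKernel_of_range_eq_ker [Fintype ι] [DecidableEq ι] [Fintype κ] [DecidableEq κ]
    {E : Matrix ζ ι S} {K : Matrix ι κ S} (hK : Function.Injective (toLin' K))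
    (hKE : range (toLin' K) = ker (toLin' E)) : E.IsKernel K := by
  refine ⟨?_, fun q X hX => existsUnique_mul_eq_of_range_le hK ?_⟩
  · rw [← toLin'.injective.eq_iff, toLin'_mul, map_zero, ← range_le_ker_iff, hKE]
  · rw [hKE, range_le_ker_iff, ← toLin'_mul, hX, map_zero]

theorem exists_isKernel_of_basis [Fintype ι] [DecidableEq ι] [Fintype κ] [DecidableEq κ]
    (E : Matrix ζ ι S) (b : Module.Basis κ S (ker (toLin' E))) :
    ∃ K : Matrix ι κ S, E.IsKernel K := by
  refine ⟨toMatrix' ((ker (toLin' E)).subtype ∘ₗ b.equivFun.symm.toLinearMap),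
    isKernel_of_range_eq_ker ?_ ?_⟩
  · simpa using (ker (toLin' E)).injective_subtype.comp b.equivFun.symm.injective
  · simp [range_comp]

theorem exists_isKernel [IsDomain S] [IsPrincipalIdealRing S] [Fintype ι] [DecidableEq ι]
    (E : Matrix ζ ι S) : ∃ r ≤ Fintype.card ι, ∃ K : Matrix ι (Fin r) S, E.IsKernel K := by
  obtain ⟨r, ⟨b⟩⟩ := Submodule.nonempty_basis_of_pid (Pi.basisFun S ι) (ker (toLin' E))
  refine ⟨r, ?_, exists_isKernel_of_basis E b⟩
  simpa [Module.finrank_eq_card_basis b] using Submodule.finrank_le (ker (toLin' E))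

theorem fromCols_neg_mul_fromRows [Fintype ι] [Fintype ι'] {q : Type*} (C : Matrix ζ ι S)
    (D : Matrix ζ ι' S) (P : Matrix ι q S) (Q : Matrix ι' q S) :
    fromCols C (-D) * fromRows P Q = C * P - D * Q := by
  rw [fromCols_mul_fromRows, Matrix.neg_mul, sub_eq_add_neg]

theorem IsKernel.isPullback_toRows [Fintype ι] [Fintype ι'] [Fintype κ] {C : Matrix ζ ι S}
    {D : Matrix ζ ι' S} {K : Matrix (ι ⊕ ι') κ S} (hK : (fromCols C (-D)).IsKernel K) :
    IsPullback C D K.toRows₁ K.toRows₂ := by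
  have hKH : ∀ {q : Type} (H : Matrix κ q S), K * H = fromRows (K.toRows₁ * H) (K.toRows₂ * H) :=
    fun H => by rw [← fromRows_mul, fromRows_toRows]
  refine ⟨?_, fun q P Q hPQ => ?_⟩
  · have h := hK.1
    rwa [← fromRows_toRows K, fromCols_neg_mul_fromRows, sub_eq_zero] at h
  · simpa only [hKH, fromRows_ext_iff] using
      hK.2 q (fromRows P Q) (by rw [fromCols_neg_mul_fromRows, hPQ, sub_self])

end Matrix

/-- The category of matrices over a principal ideal domain has pullbacks; moreover the
pullback object (a free module) has rank at most `n + m`. -/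
theorem matrix_pid_has_pullbacks
    {R : Type*} [CommRing R] [IsDomain R] [IsPrincipalIdealRing R]
    {n m z : ℕ} (C : Matrix (Fin z) (Fin n) R) (D : Matrix (Fin z) (Fin m) R) :
    ∃ (r : ℕ), r ≤ n + m ∧
      ∃ (A : Matrix (Fin n) (Fin r) R) (B : Matrix (Fin m) (Fin r) R),
        C * A = D * B ∧
        ∀ (q : ℕ) (P : Matrix (Fin n) (Fin q) R) (Q : Matrix (Fin m) (Fin q) R),
          C * P = D * Q → ∃! H : Matrix (Fin r) (Fin q) R, A * H = P ∧ B * H = Q := by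
  obtain ⟨r, hr, K, hK⟩ := (fromCols C (-D)).exists_isKernel
  exact ⟨r, by simpa using hr, _, _, hK.isPullback_toRows⟩
end

section
/- Let R be a principal ideal domain and let C : Matrix (Fin n) (Fin z) R and D : Matrix (Fin m) (Fin z) R be matrices (viewed as arrows z → n and z → m of Mat(R)). Then there exist a natural number t and matrices P : Matrix (Fin t) (Fin n) R, Q : Matrix (Fin t) (Fin m) R such that P·C = Q·D and the square is a pushout in Mat(R): for every q ∈ ℕ and all matrices E : Matrix (Fin q) (Fin n) R, F : Matrix (Fin q) (Fin m) R with E·C = F·D there exists a unique G : Matrix (Fin q) (Fin t) R with G·P = E and G·Q = F. In other words, Mat(R) has pushouts for any principal ideal domain R; the pushout of C and D is obtained as the transpose of the pullback of the transposed matrices Cᵀ and Dᵀ. -/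
/-- The category of matrices over a principal ideal domain has pushouts. -/
theorem matrix_pid_has_pushouts
    {R : Type*} [CommRing R] [IsDomain R] [IsPrincipalIdealRing R]
    {n m z : ℕ} (C : Matrix (Fin n) (Fin z) R) (D : Matrix (Fin m) (Fin z) R) :
    ∃ (t : ℕ) (P : Matrix (Fin t) (Fin n) R) (Q : Matrix (Fin t) (Fin m) R),
      P * C = Q * D ∧
      ∀ (q : ℕ) (E : Matrix (Fin q) (Fin n) R) (F : Matrix (Fin q) (Fin m) R),
        E * C = F * D → ∃! G : Matrix (Fin q) (Fin t) R, G * P = E ∧ G * Q = F := by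
  classical
  set M : Matrix (Fin n ⊕ Fin m) (Fin z) R := Matrix.fromRows C (-D) with hM
  set N := LinearMap.ker M.vecMulLinear with hN
  obtain ⟨t, b⟩ := Submodule.basisOfPid (Pi.basisFun R (Fin n ⊕ Fin m)) N
  set P : Matrix (Fin t) (Fin n) R := Matrix.of fun i j => (b i : (Fin n ⊕ Fin m) → R) (Sum.inl j) with hP
  set Q : Matrix (Fin t) (Fin m) R := Matrix.of fun i j => (b i : (Fin n ⊕ Fin m) → R) (Sum.inr j) with hQ
  have hker : ∀ (v : (Fin n ⊕ Fin m) → R), v ∈ N ↔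
      ∀ j, ∑ a, v (Sum.inl a) * C a j = ∑ a, v (Sum.inr a) * D a j := by
    intro v
    rw [hN, LinearMap.mem_ker]
    constructor
    · intro h j
      have := congrFun h j
      simp only [Matrix.vecMulLinear_apply, Matrix.vecMul, dotProduct,
        Fintype.sum_sum_type, hM, Matrix.fromRows_apply_inl, Matrix.fromRows_apply_inr,
        Pi.zero_apply, Matrix.neg_apply, mul_neg, Finset.sum_neg_distrib] at this
      exact add_neg_eq_zero.mp this
    · intro h
      funext j
      simp only [Matrix.vecMulLinear_apply, Matrix.vecMul, dotProduct,
        Fintype.sum_sum_type, hM, Matrix.fromRows_apply_inl, Matrix.fromRows_apply_inr,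
        Pi.zero_apply, Matrix.neg_apply, mul_neg, Finset.sum_neg_distrib]
      rw [h j]; ring
  refine ⟨t, P, Q, ?_, ?_⟩
  · ext i j
    have := ((hker _).mp (b i).2) j
    simpa [Matrix.mul_apply, hP, hQ] using this
  · intro q E F hEF
    set r : Fin q → (Fin n ⊕ Fin m) → R := fun i => Sum.elim (E i) (F i) with hr
    have hrN : ∀ i, r i ∈ N := by
      intro i
      rw [hker]
      intro j
      have := congrFun (congrFun hEF i) j
      simpa [Matrix.mul_apply, hr] using this
    set G : Matrix (Fin q) (Fin t) R := Matrix.of fun i k => b.repr ⟨r i, hrN i⟩ k with hG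
    have key : ∀ (H : Matrix (Fin q) (Fin t) R) (i : Fin q),
        (∑ k, H i k • (b k : (Fin n ⊕ Fin m) → R)) = Sum.elim ((H * P) i) ((H * Q) i) := by
      intro H i
      funext x
      cases x with
      | inl j => simp [Matrix.mul_apply, hP]
      | inr j => simp [Matrix.mul_apply, hQ]
    have hGsum : ∀ i, (∑ k, G i k • (b k : (Fin n ⊕ Fin m) → R)) = r i := by
      intro i
      have : ((∑ k, G i k • b k : N) : (Fin n ⊕ Fin m) → R) = ((⟨r i, hrN i⟩ : N) : _) := by
        congr 1
        simpa [hG] using b.sum_repr ⟨r i, hrN i⟩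
      simpa using this
    refine ⟨G, ⟨?_, ?_⟩, ?_⟩
    · ext i j
      have := congrFun (hGsum i) (Sum.inl j)
      rw [key G i] at this
      simpa [hr] using this
    · ext i j
      have := congrFun (hGsum i) (Sum.inr j)
      rw [key G i] at this
      simpa [hr] using this
    · rintro G' ⟨h1, h2⟩
      ext i k
      have hx : (∑ j, G' i j • b j : N) = ⟨r i, hrN i⟩ := by
        apply Subtype.ext
        push_cast
        rw [key G' i, h1, h2]
      have := congrFun (b.repr_sum_self (G' i)) k
      rw [hx] at this
      simpa [hG] using this.symm
end
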